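/- Let G be a connected r-regular graph with n ≥ 2 vertices. Then the Kirchhoff index of the line graph L(G) satisfies Kf(L(G)) = (r/2)·Kf(G) + (r − 2)n²/8. -/

import Mathlib

open Classical Filter Topology

universe u

def lineG {V : Type u} (H : SimpleGraph V) : SimpleGraph H.edgeSet where
  Adj e f := e ≠ f ∧ ∃ v, v ∈ (e : Sym2 V) ∧ v ∈ (f : Sym2 V)
  symm := by constructor; rintro e f ⟨hne, v, h1, h2⟩; exact ⟨hne.symm, v, h2, h1⟩
  loopless := by constructor; rintro e ⟨hne, _⟩; exact hne rfl

def subdiv {V : Type u} (G : SimpleGraph V) : SimpleGraph (V ⊕ G.edgeSet) where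
  Adj x y := (∃ v e, x = Sum.inl v ∧ y = Sum.inr e ∧ v ∈ (e : Sym2 V)) ∨
             (∃ v e, x = Sum.inr e ∧ y = Sum.inl v ∧ v ∈ (e : Sym2 V))
  symm := by
    constructor
    rintro x y (⟨v, e, h1, h2, h3⟩ | ⟨v, e, h1, h2, h3⟩)
    · exact Or.inr ⟨v, e, h2, h1, h3⟩
    · exact Or.inl ⟨v, e, h2, h1, h3⟩
  loopless := by constructor; rintro x (⟨v, e, rfl, h2, _⟩ | ⟨v, e, rfl, h2, _⟩) <;> simp at h2

def cliqueIns {V : Type u} (G : SimpleGraph V) : SimpleGraph (subdiv G).edgeSet :=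
  lineG (subdiv G)

def regOf {V : Type u} (H : SimpleGraph V) (r : ℕ) : Prop :=
  ∀ v, Nat.card (H.neighborSet v) = r

noncomputable def adjMat {V : Type u} (H : SimpleGraph V) : Matrix V V ℝ :=
  Matrix.of fun i j => if H.Adj i j then 1 else 0

noncomputable def specM {V : Type u} [Finite V] (M : Matrix V V ℝ) : Multiset ℝ :=
  letI := Fintype.ofFinite V
  letI := Classical.decEq V
  M.charpoly.roots

noncomputable def lapMat {V : Type u} [Finite V] (H : SimpleGraph V) : Matrix V V ℝ :=
  letI := Fintype.ofFinite V
  Matrix.diagonal (fun v => ∑ w, adjMat H v w) - adjMat H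

noncomputable def mu2 {V : Type u} [Finite V] (M : Matrix V V ℝ) : ℝ :=
  ((specM M).sort (· ≤ ·)).getD 1 0

noncomputable def energy {V : Type u} [Finite V] (H : SimpleGraph V) : ℝ :=
  ((specM (adjMat H)).map (fun x => |x|)).sum

noncomputable def effCond {V : Type u} [Finite V] (H : SimpleGraph V) (u v : V) : ℝ :=
  letI := Fintype.ofFinite V
  sInf {c : ℝ | ∃ φ : V → ℝ, φ u = 1 ∧ φ v = 0 ∧
    c = (1/2) * ∑ x, ∑ y, if H.Adj x y then (φ x - φ y)^2 else 0}

noncomputable def resDist {V : Type u} [Finite V] (H : SimpleGraph V) (u v : V) : ℝ :=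
  (effCond H u v)⁻¹

noncomputable def Kf {V : Type u} [Finite V] (H : SimpleGraph V) : ℝ :=
  letI := Fintype.ofFinite V
  (1/2) * ∑ u, ∑ v, if u ≠ v then resDist H u v else 0

noncomputable def NST {V : Type u} (H : SimpleGraph V) : ℕ :=
  Nat.card {T : SimpleGraph V // T ≤ H ∧ T.IsTree}

noncomputable def numPM {V : Type u} (H : SimpleGraph V) : ℕ :=
  Nat.card {M : SimpleGraph.Subgraph H // M.IsPerfectMatching}

def IterCI {V : Type u} (G : SimpleGraph V) : ℕ → Σ W : Type u, SimpleGraph W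
  | 0 => ⟨V, G⟩
  | k + 1 => ⟨_, cliqueIns (IterCI G k).2⟩

instance instFiniteIter {V : Type u} [Finite V] (G : SimpleGraph V) (k : ℕ) :
    Finite (IterCI G k).1 := by
  induction k with
  | zero => exact ‹Finite V›
  | succ k ih =>
    show Finite ↥(subdiv (IterCI G k).2).edgeSet
    exact Subtype.finite

def TwoConnected {V : Type u} [Fintype V] (G : SimpleGraph V) : Prop :=
  G.Connected ∧ 3 ≤ Fintype.card V ∧
    ∀ v : V, ((⊤ : G.Subgraph).deleteVerts {v}).coe.Connected

set_option linter.unusedSectionVars false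

namespace KfAux
open Matrix

variable {W : Type u} [Fintype W]

noncomputable def Jm (W : Type u) : Matrix W W ℝ := Matrix.of fun _ _ => 1

noncomputable def Mm (H : SimpleGraph W) : Matrix W W ℝ :=
  lapMat H + ((Fintype.card W : ℝ))⁻¹ • Jm W

lemma adjMat_symm (H : SimpleGraph W) (i j : W) : adjMat H j i = adjMat H i j := by
  simp [adjMat, SimpleGraph.adj_comm]

lemma lapMat_apply (H : SimpleGraph W) (i j : W) :
    lapMat H i j = (if i = j then ∑ w, adjMat H i w else 0) - adjMat H i j := by
  unfold lapMat
  rw [Subsingleton.elim (Fintype.ofFinite W) ‹Fintype W›]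
  rw [Matrix.sub_apply, Matrix.diagonal]
  rfl

lemma lapMat_symm (H : SimpleGraph W) (i j : W) : lapMat H j i = lapMat H i j := by
  rw [lapMat_apply, lapMat_apply, adjMat_symm]
  rcases eq_or_ne i j with rfl | h
  · simp
  · rw [if_neg h, if_neg (Ne.symm h)]

lemma lapMat_rowsum (H : SimpleGraph W) (i : W) : ∑ j, lapMat H i j = 0 := by
  simp only [lapMat_apply]
  rw [Finset.sum_sub_distrib, Finset.sum_ite_eq (Finset.univ) i (fun _ => ∑ w, adjMat H i w)]
  simp

lemma lapMat_colsum (H : SimpleGraph W) (j : W) : ∑ i, lapMat H i j = 0 := by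
  rw [Finset.sum_congr rfl fun i _ => lapMat_symm H j i]; exact lapMat_rowsum H j


lemma energy_eq (H : SimpleGraph W) (φ : W → ℝ) :
    (1/2) * ∑ x, ∑ y, (if H.Adj x y then (φ x - φ y)^2 else 0) = φ ⬝ᵥ (lapMat H *ᵥ φ) := by
  have hA : ∀ x y, (if H.Adj x y then (φ x - φ y)^2 else 0) = adjMat H x y * (φ x - φ y)^2 := by
    intro x y; by_cases h : H.Adj x y <;> simp [adjMat, h]
  have lhs_eq : (1/2) * ∑ x, ∑ y, (if H.Adj x y then (φ x - φ y)^2 else 0)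
      = (1/2) * ∑ x, ∑ y, adjMat H x y * (φ x - φ y)^2 := by
    congr 1; exact Finset.sum_congr rfl fun x _ => Finset.sum_congr rfl fun y _ => hA x y
  have expand : ∀ x y, adjMat H x y * (φ x - φ y)^2
      = adjMat H x y * φ x^2 + adjMat H x y * φ y^2 - 2 * (adjMat H x y * φ x * φ y) := by
    intro x y; ring
  have h2 : ∑ x, ∑ y, adjMat H x y * φ y^2 = ∑ x, ∑ y, adjMat H x y * φ x^2 := by
    rw [Finset.sum_comm]
    exact Finset.sum_congr rfl fun x _ => Finset.sum_congr rfl fun y _ => by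
      rw [adjMat_symm]
  have h3 : ∀ x, ∑ y, adjMat H x y * φ x^2 = (∑ y, adjMat H x y) * φ x^2 := by
    intro x; rw [Finset.sum_mul]
  have step : ∑ x, ∑ y, adjMat H x y * (φ x - φ y)^2
      = ∑ x, ∑ y, adjMat H x y * φ x^2 + ∑ x, ∑ y, adjMat H x y * φ y^2
        - 2 * ∑ x, ∑ y, adjMat H x y * φ x * φ y := by
    have e1 : ∀ x ∈ Finset.univ, ∑ y, adjMat H x y * (φ x - φ y)^2 =
        ∑ y, (adjMat H x y * φ x^2 + adjMat H x y * φ y^2 - 2*(adjMat H x y * φ x * φ y)) :=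
      fun x _ => Finset.sum_congr rfl fun y _ => expand x y
    rw [Finset.sum_congr rfl e1]
    simp only [Finset.sum_add_distrib, Finset.sum_sub_distrib, ← Finset.mul_sum]
  have lhs2 : (1/2) * ∑ x, ∑ y, adjMat H x y * (φ x - φ y)^2
      = ∑ x, (∑ y, adjMat H x y) * φ x^2 - ∑ x, ∑ y, adjMat H x y * φ x * φ y := by
    rw [step, h2]
    simp_rw [h3]
    ring
  rw [lhs_eq, lhs2]
  have ptw : ∀ x y, φ x * (lapMat H x y * φ y)
      = (if x = y then (∑ w, adjMat H x w) * φ x^2 else 0) - adjMat H x y * φ x * φ y := by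
    intro x y
    rw [lapMat_apply]
    rcases eq_or_ne x y with rfl | h
    · rw [if_pos rfl, if_pos rfl]; ring
    · rw [if_neg h, if_neg h]; ring
  have rhs : φ ⬝ᵥ (lapMat H *ᵥ φ)
      = ∑ x, (∑ y, adjMat H x y) * φ x^2 - ∑ x, ∑ y, adjMat H x y * φ x * φ y := by
    simp only [dotProduct, mulVec, Finset.mul_sum]
    have hx : ∀ x ∈ Finset.univ, ∑ y, φ x * (lapMat H x y * φ y)
        = (∑ y, adjMat H x y) * φ x^2 - ∑ y, adjMat H x y * φ x * φ y := by
      intro x _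
      rw [Finset.sum_congr rfl fun y _ => ptw x y, Finset.sum_sub_distrib,
        Finset.sum_ite_eq Finset.univ x (fun _ => (∑ w, adjMat H x w) * φ x^2)]
      simp
    rw [Finset.sum_congr rfl hx, Finset.sum_sub_distrib]
  rw [rhs]

lemma energy_nonneg (H : SimpleGraph W) (φ : W → ℝ) : 0 ≤ φ ⬝ᵥ (lapMat H *ᵥ φ) := by
  rw [← energy_eq]
  have : ∀ x ∈ Finset.univ, (0:ℝ) ≤ ∑ y, (if H.Adj x y then (φ x - φ y)^2 else 0) := by
    intro x _
    refine Finset.sum_nonneg fun y _ => ?_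
    by_cases h : H.Adj x y <;> simp [h, sq_nonneg]
  have := Finset.sum_nonneg this
  linarith

lemma Jm_mulVec (φ : W → ℝ) : (Jm W) *ᵥ φ = fun _ => ∑ x, φ x := by
  funext i; simp [Jm, mulVec, dotProduct]

lemma quadM (H : SimpleGraph W) (φ : W → ℝ) :
    φ ⬝ᵥ (Mm H *ᵥ φ) = φ ⬝ᵥ (lapMat H *ᵥ φ) + (∑ x, φ x)^2 / (Fintype.card W : ℝ) := by
  rw [Mm, Matrix.add_mulVec, dotProduct_add, Matrix.smul_mulVec, dotProduct_smul,
    Jm_mulVec]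
  have : φ ⬝ᵥ (fun _ => ∑ x, φ x) = (∑ x, φ x) * (∑ x, φ x) := by
    simp [dotProduct, ← Finset.sum_mul]
  rw [this]
  field_simp
  ring

lemma Mm_psd (H : SimpleGraph W) (φ : W → ℝ) : 0 ≤ φ ⬝ᵥ (Mm H *ᵥ φ) := by
  rw [quadM]
  have h1 := energy_nonneg H φ
  have h2 : 0 ≤ (∑ x, φ x)^2 / (Fintype.card W : ℝ) :=
    div_nonneg (sq_nonneg _) (Nat.cast_nonneg _)
  linarith

lemma Mm_symm (H : SimpleGraph W) (i j : W) : Mm H j i = Mm H i j := by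
  simp [Mm, lapMat_symm, Jm]

lemma Mm_transpose (H : SimpleGraph W) : (Mm H)ᵀ = Mm H := by
  ext i j; rw [Matrix.transpose_apply]; exact Mm_symm H i j

lemma dot_sym (M : Matrix W W ℝ) (hM : ∀ i j, M j i = M i j) (x y : W → ℝ) :
    x ⬝ᵥ (M *ᵥ y) = y ⬝ᵥ (M *ᵥ x) := by
  simp only [dotProduct, mulVec, Finset.mul_sum]
  rw [Finset.sum_comm]
  exact Finset.sum_congr rfl fun i _ => Finset.sum_congr rfl fun j _ => by rw [hM i j]; ring

lemma cs (H : SimpleGraph W) (x y : W → ℝ) :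
    (x ⬝ᵥ (Mm H *ᵥ y))^2 ≤ (x ⬝ᵥ (Mm H *ᵥ x)) * (y ⬝ᵥ (Mm H *ᵥ y)) := by
  set a := y ⬝ᵥ (Mm H *ᵥ y) with ha
  set b := 2 * (x ⬝ᵥ (Mm H *ᵥ y)) with hb
  set c := x ⬝ᵥ (Mm H *ᵥ x) with hc
  have key : ∀ t : ℝ, 0 ≤ a * (t * t) + b * t + c := by
    intro t
    have expand : (x + t • y) ⬝ᵥ (Mm H *ᵥ (x + t • y)) = a * (t * t) + b * t + c := by
      rw [Matrix.mulVec_add, dotProduct_add, add_dotProduct, add_dotProduct,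
        Matrix.mulVec_smul, dotProduct_smul, smul_dotProduct, smul_dotProduct,
        dotProduct_smul]
      have hsym : x ⬝ᵥ (Mm H *ᵥ y) = y ⬝ᵥ (Mm H *ᵥ x) := dot_sym _ (Mm_symm H) x y
      simp only [smul_eq_mul, ha, hb, hc]
      rw [← hsym]
      ring
    rw [← expand]
    exact Mm_psd H _
  have hd := discrim_le_zero key
  rw [discrim] at hd
  have hs : b^2 = 4 * (x ⬝ᵥ (Mm H *ᵥ y))^2 := by rw [hb]; ring
  nlinarith [hd, hs]


lemma Mm_mulVec_one [Nonempty W] (H : SimpleGraph W) :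
    Mm H *ᵥ (fun _ => (1:ℝ)) = fun _ => 1 := by
  have hcard : (Fintype.card W : ℝ) ≠ 0 := Nat.cast_ne_zero.mpr Fintype.card_ne_zero
  funext i
  rw [Mm, Matrix.add_mulVec, Matrix.smul_mulVec, Jm_mulVec]
  have h1 : (lapMat H *ᵥ fun _ => (1:ℝ)) i = 0 := by
    simp only [mulVec, dotProduct, mul_one]
    exact lapMat_rowsum H i
  have h2 : (∑ _x : W, (1:ℝ)) = (Fintype.card W : ℝ) := by simp
  simp only [Pi.add_apply, Pi.smul_apply, h1, smul_eq_mul, zero_add, h2]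
  exact inv_mul_cancel₀ hcard

lemma lap_mulVec_one (H : SimpleGraph W) :
    lapMat H *ᵥ (fun _ => (1:ℝ)) = 0 := by
  funext i
  simp only [mulVec, dotProduct, mul_one, Pi.zero_apply]
  exact lapMat_rowsum H i

lemma one_dot_lap_mulVec (H : SimpleGraph W) (x : W → ℝ) :
    (fun _ => (1:ℝ)) ⬝ᵥ (lapMat H *ᵥ x) = 0 := by
  simp only [dotProduct, mulVec, one_mul]
  rw [Finset.sum_comm]
  rw [Finset.sum_congr rfl fun j _ => (by rw [← Finset.sum_mul] :
    ∑ i, lapMat H i j * x j = (∑ i, lapMat H i j) * x j)]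
  simp [lapMat_colsum]

lemma Mm_isUnit_det (H : SimpleGraph W) (hconn : H.Connected) : IsUnit (Mm H).det := by
  rw [isUnit_iff_ne_zero]
  intro hdet
  obtain ⟨v, hvne, hveq⟩ := (Matrix.exists_mulVec_eq_zero_iff).mpr hdet
  have hq : v ⬝ᵥ (Mm H *ᵥ v) = 0 := by rw [hveq, dotProduct_zero]
  have h1 := energy_nonneg H v
  have h2 : (0:ℝ) ≤ (∑ x, v x)^2 / (Fintype.card W : ℝ) :=
    div_nonneg (sq_nonneg _) (Nat.cast_nonneg _)
  rw [quadM] at hq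
  have hE : v ⬝ᵥ (lapMat H *ᵥ v) = 0 := by linarith
  have hS : (∑ x, v x)^2 / (Fintype.card W : ℝ) = 0 := by linarith
  rw [← energy_eq] at hE
  have hE2 : ∑ x, ∑ y, (if H.Adj x y then (v x - v y)^2 else 0) = 0 := by linarith
  have hnn : ∀ x y, (0:ℝ) ≤ (if H.Adj x y then (v x - v y)^2 else 0) := by
    intro x y; by_cases h : H.Adj x y <;> simp [h, sq_nonneg]
  have hall : ∀ x ∈ Finset.univ, ∀ y ∈ Finset.univ,
      (if H.Adj x y then (v x - v y)^2 else 0) = 0 := by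
    have houter := (Finset.sum_eq_zero_iff_of_nonneg
      (fun x _ => Finset.sum_nonneg fun y _ => hnn x y)).mp hE2
    intro x hx
    exact fun y hy => (Finset.sum_eq_zero_iff_of_nonneg (fun y _ => hnn x y)).mp (houter x hx) y hy
  have hadj : ∀ x y, H.Adj x y → v x = v y := by
    intro x y hxy
    have := hall x (Finset.mem_univ x) y (Finset.mem_univ y)
    rw [if_pos hxy] at this
    have h0 : v x - v y = 0 := by
      have := (pow_eq_zero_iff (two_ne_zero)).mp this
      exact this
    linarith
  have hconst : ∀ x y, H.Reachable x y → v x = v y := by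
    intro x y h
    obtain ⟨p⟩ := h
    induction p with
    | nil => rfl
    | cons h p ih => exact (hadj _ _ h).trans ih
  haveI : Nonempty W := hconn.nonempty
  set x0 := Classical.arbitrary W with hx0
  have hsum : ∑ x, v x = (Fintype.card W : ℝ) * v x0 := by
    rw [Finset.sum_congr rfl fun x _ => hconst x x0 (hconn x x0)]
    simp [mul_comm]
  have hcard : (Fintype.card W : ℝ) ≠ 0 := Nat.cast_ne_zero.mpr Fintype.card_ne_zero
  have : ∑ x, v x = 0 := by
    have := hS
    field_simp at this
    simpa using this
  rw [hsum] at this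
  have hv0 : v x0 = 0 := by
    rcases mul_eq_zero.mp this with h | h
    · exact absurd h hcard
    · exact h
  apply hvne
  funext x
  rw [hconst x x0 (hconn x x0), hv0]; rfl

lemma Mm_inv_symm (H : SimpleGraph W) (i j : W) : (Mm H)⁻¹ j i = (Mm H)⁻¹ i j := by
  have h : ((Mm H)⁻¹)ᵀ = (Mm H)⁻¹ := by
    rw [Matrix.transpose_nonsing_inv, Mm_transpose]
  calc (Mm H)⁻¹ j i = ((Mm H)⁻¹)ᵀ i j := rfl
  _ = (Mm H)⁻¹ i j := by rw [h]

lemma Mm_inv_mulVec_one [Nonempty W] (H : SimpleGraph W) (hdet : IsUnit (Mm H).det) :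
    (Mm H)⁻¹ *ᵥ (fun _ => (1:ℝ)) = fun _ => 1 := by
  conv_lhs => rw [← Mm_mulVec_one H]
  rw [Matrix.mulVec_mulVec, Matrix.nonsing_inv_mul _ hdet, Matrix.one_mulVec]

noncomputable def bvec (u v : W) : W → ℝ :=
  fun w => (if w = u then 1 else 0) - (if w = v then 1 else 0)

lemma bvec_dot (u v : W) (ψ : W → ℝ) : bvec u v ⬝ᵥ ψ = ψ u - ψ v := by
  simp only [bvec, dotProduct, sub_mul, ite_mul, one_mul, zero_mul]
  rw [Finset.sum_sub_distrib]
  rw [Finset.sum_ite_eq' Finset.univ u ψ, Finset.sum_ite_eq' Finset.univ v ψ]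
  simp

lemma dot_bvec (u v : W) (ψ : W → ℝ) : ψ ⬝ᵥ bvec u v = ψ u - ψ v := by
  rw [dotProduct_comm]; exact bvec_dot u v ψ

lemma mulVec_bvec (A : Matrix W W ℝ) (u v : W) :
    A *ᵥ bvec u v = fun i => A i u - A i v := by
  funext i
  show (A i) ⬝ᵥ bvec u v = _
  rw [dot_bvec]

section Inv
variable (H : SimpleGraph W)

noncomputable def qres (H : SimpleGraph W) (u v : W) : ℝ :=
  bvec u v ⬝ᵥ ((Mm H)⁻¹ *ᵥ bvec u v)

lemma qres_entries (u v : W) :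
    qres H u v = (Mm H)⁻¹ u u + (Mm H)⁻¹ v v - (Mm H)⁻¹ u v - (Mm H)⁻¹ v u := by
  rw [qres, mulVec_bvec, bvec_dot]
  ring

lemma Mm_mulVec_psi (hdet : IsUnit (Mm H).det) (b : W → ℝ) :
    Mm H *ᵥ ((Mm H)⁻¹ *ᵥ b) = b := by
  rw [Matrix.mulVec_mulVec, Matrix.mul_nonsing_inv _ hdet, Matrix.one_mulVec]

lemma qres_pos (hdet : IsUnit (Mm H).det) (u v : W) (huv : u ≠ v) : 0 < qres H u v := by
  set ψ := (Mm H)⁻¹ *ᵥ bvec u v with hψ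
  have hMψ : Mm H *ᵥ ψ = bvec u v := Mm_mulVec_psi H hdet _
  have hq : qres H u v = ψ ⬝ᵥ (Mm H *ᵥ ψ) := by
    rw [hMψ, qres, dotProduct_comm]
  have hnn : 0 ≤ qres H u v := by rw [hq]; exact Mm_psd H ψ
  rcases lt_or_eq_of_le hnn with h | h
  · exact h
  · exfalso
    have hz : ∀ z : W → ℝ, z ⬝ᵥ bvec u v = 0 := by
      intro z
      have hcs := cs H z ψ
      rw [← hq, ← h] at hcs
      have : (z ⬝ᵥ (Mm H *ᵥ ψ))^2 ≤ 0 := by linarith [hcs]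
      have h0 : z ⬝ᵥ (Mm H *ᵥ ψ) = 0 := by nlinarith [sq_nonneg (z ⬝ᵥ (Mm H *ᵥ ψ))]
      rw [hMψ] at h0
      exact h0
    have := hz (fun w => if w = u then 1 else 0)
    rw [dot_bvec] at this
    rw [if_pos rfl, if_neg (Ne.symm huv)] at this
    norm_num at this
end Inv

lemma shift_energy (H : SimpleGraph W) (φ : W → ℝ) (t : ℝ) :
    (fun w => φ w - t) ⬝ᵥ (lapMat H *ᵥ (fun w => φ w - t)) = φ ⬝ᵥ (lapMat H *ᵥ φ) := by
  have h1 : (fun w => φ w - t) = φ - t • (fun _ => (1:ℝ)) := by funext w; simp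
  rw [h1, Matrix.mulVec_sub, Matrix.mulVec_smul, lap_mulVec_one, smul_zero, sub_zero,
    sub_dotProduct, smul_dotProduct, one_dot_lap_mulVec]
  simp

lemma effCond_bridge (H : SimpleGraph W) (u v : W) :
    effCond H u v = sInf {c : ℝ | ∃ φ : W → ℝ, φ u = 1 ∧ φ v = 0 ∧
      c = (1/2) * ∑ x, ∑ y, if H.Adj x y then (φ x - φ y)^2 else 0} := by
  unfold effCond
  rw [Subsingleton.elim (Fintype.ofFinite W) ‹Fintype W›]

lemma effCond_val (H : SimpleGraph W) (hdet : IsUnit (Mm H).det) (u v : W) (huv : u ≠ v) :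
    effCond H u v = (qres H u v)⁻¹ := by
  haveI : Nonempty W := ⟨u⟩
  rw [effCond_bridge]
  have hqpos := qres_pos H hdet u v huv
  have hqne : qres H u v ≠ 0 := ne_of_gt hqpos
  have hMψ : Mm H *ᵥ ((Mm H)⁻¹ *ᵥ bvec u v) = bvec u v := Mm_mulVec_psi H hdet _
  have hψsum : ∑ x, ((Mm H)⁻¹ *ᵥ bvec u v) x = 0 := by
    have h1 : (fun _ => (1:ℝ)) ⬝ᵥ ((Mm H)⁻¹ *ᵥ bvec u v) = 0 := by
      rw [dot_sym _ (Mm_inv_symm H), Mm_inv_mulVec_one H hdet, bvec_dot]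
      ring
    simpa [dotProduct] using h1
  have hψMψ : ((Mm H)⁻¹ *ᵥ bvec u v) ⬝ᵥ (Mm H *ᵥ ((Mm H)⁻¹ *ᵥ bvec u v)) = qres H u v := by
    rw [hMψ, dotProduct_comm]; rfl
  have hψLψ : ((Mm H)⁻¹ *ᵥ bvec u v) ⬝ᵥ (lapMat H *ᵥ ((Mm H)⁻¹ *ᵥ bvec u v)) = qres H u v := by
    have h2 := quadM H ((Mm H)⁻¹ *ᵥ bvec u v)
    have hz : ((0:ℝ))^2 / (Fintype.card W : ℝ) = 0 := by norm_num
    rw [hψsum, hz, add_zero, hψMψ] at h2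
    linarith [h2]
  have hψuv : ((Mm H)⁻¹ *ᵥ bvec u v) u - ((Mm H)⁻¹ *ᵥ bvec u v) v = qres H u v := by
    have := bvec_dot u v ((Mm H)⁻¹ *ᵥ bvec u v)
    rw [qres]
    linarith [this]
  apply IsLeast.csInf_eq
  constructor
  · -- membership: the harmonic minimizer
    refine ⟨fun w => (qres H u v)⁻¹ * (((Mm H)⁻¹ *ᵥ bvec u v) w - ((Mm H)⁻¹ *ᵥ bvec u v) v),
      ?_, ?_, ?_⟩
    · dsimp only; rw [hψuv]; field_simp
    · dsimp only; rw [sub_self, mul_zero]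
    · rw [energy_eq]
      have hφstar : (fun w => (qres H u v)⁻¹ * (((Mm H)⁻¹ *ᵥ bvec u v) w - ((Mm H)⁻¹ *ᵥ bvec u v) v))
          = (qres H u v)⁻¹ • ((Mm H)⁻¹ *ᵥ bvec u v)
            - ((qres H u v)⁻¹ * ((Mm H)⁻¹ *ᵥ bvec u v) v) • (fun _ => (1:ℝ)) := by
        funext w
        simp only [Pi.sub_apply, Pi.smul_apply, smul_eq_mul, mul_one]
        ring
      rw [hφstar, Matrix.mulVec_sub, Matrix.mulVec_smul, Matrix.mulVec_smul, lap_mulVec_one,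
        smul_zero, sub_zero, sub_dotProduct, smul_dotProduct, dotProduct_smul, dotProduct_smul,
        smul_dotProduct, hψLψ, one_dot_lap_mulVec]
      simp only [smul_eq_mul, mul_zero, sub_zero]
      field_simp
  · rintro c ⟨φ, hφu, hφv, rfl⟩
    rw [energy_eq]
    have hcard : (Fintype.card W : ℝ) ≠ 0 := Nat.cast_ne_zero.mpr Fintype.card_ne_zero
    set t := (∑ x, φ x) / (Fintype.card W : ℝ) with ht
    have hφ'sum : ∑ x, (φ x - t) = 0 := by
      rw [Finset.sum_sub_distrib, Finset.sum_const, ht]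
      rw [Finset.card_univ, nsmul_eq_mul, mul_div_assoc', mul_div_cancel_left₀ _ hcard, sub_self]
    have hE' : (fun w => φ w - t) ⬝ᵥ (lapMat H *ᵥ (fun w => φ w - t)) = φ ⬝ᵥ (lapMat H *ᵥ φ) :=
      shift_energy H φ t
    have hM' : (fun w => φ w - t) ⬝ᵥ (Mm H *ᵥ (fun w => φ w - t)) = φ ⬝ᵥ (lapMat H *ᵥ φ) := by
      rw [quadM, hE', hφ'sum]
      simp
    have hcross : (fun w => φ w - t) ⬝ᵥ (Mm H *ᵥ ((Mm H)⁻¹ *ᵥ bvec u v)) = 1 := by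
      rw [hMψ, dot_bvec]
      rw [hφu, hφv]
      ring
    have hcs := cs H (fun w => φ w - t) ((Mm H)⁻¹ *ᵥ bvec u v)
    rw [hcross, hM', hψMψ] at hcs
    have h1le : 1 ≤ (φ ⬝ᵥ (lapMat H *ᵥ φ)) * qres H u v := by
      have : (1:ℝ)^2 = 1 := one_pow 2
      linarith [hcs]
    rw [inv_eq_one_div, div_le_iff₀ hqpos]
    linarith

lemma resDist_val (H : SimpleGraph W) (hdet : IsUnit (Mm H).det) (u v : W) (huv : u ≠ v) :
    resDist H u v = qres H u v := by
  rw [resDist, effCond_val H hdet u v huv, inv_inv]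

lemma Kf_bridge (H : SimpleGraph W) :
    Kf H = (1/2) * ∑ u, ∑ v, if u ≠ v then resDist H u v else 0 := by
  unfold Kf
  rw [Subsingleton.elim (Fintype.ofFinite W) ‹Fintype W›]

lemma Kf_trace [Nonempty W] (H : SimpleGraph W) (hdet : IsUnit (Mm H).det) :
    Kf H = (Fintype.card W : ℝ) * Matrix.trace ((Mm H)⁻¹) - Fintype.card W := by
  rw [Kf_bridge]
  have hterm : ∀ u v : W, (if u ≠ v then resDist H u v else 0)
      = (Mm H)⁻¹ u u + (Mm H)⁻¹ v v - (Mm H)⁻¹ u v - (Mm H)⁻¹ v u := by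
    intro u v
    rcases eq_or_ne u v with rfl | h
    · simp
    · rw [if_pos h, resDist_val H hdet u v h, qres_entries]
  rw [Finset.sum_congr rfl fun u _ => Finset.sum_congr rfl fun v _ => hterm u v]
  have rowsum : ∀ u, ∑ v, (Mm H)⁻¹ u v = 1 := by
    intro u
    have := congrFun (Mm_inv_mulVec_one H hdet) u
    simpa [mulVec, dotProduct] using this
  have colsum : ∀ v, ∑ u, (Mm H)⁻¹ u v = 1 := by
    intro v
    rw [Finset.sum_congr rfl fun u _ => Mm_inv_symm H v u]
    exact rowsum v
  have htr : Matrix.trace ((Mm H)⁻¹) = ∑ w, (Mm H)⁻¹ w w := rfl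
  have inner : ∀ u, ∑ v, ((Mm H)⁻¹ u u + (Mm H)⁻¹ v v - (Mm H)⁻¹ u v - (Mm H)⁻¹ v u)
      = (Fintype.card W : ℝ) * (Mm H)⁻¹ u u + Matrix.trace ((Mm H)⁻¹) - 2 := by
    intro u
    rw [Finset.sum_sub_distrib, Finset.sum_sub_distrib, Finset.sum_add_distrib,
      Finset.sum_const, rowsum u, colsum u, htr]
    simp only [nsmul_eq_mul, Finset.card_univ]
    ring
  rw [Finset.sum_congr rfl fun u _ => inner u]
  rw [Finset.sum_sub_distrib, Finset.sum_add_distrib, Finset.sum_const, Finset.sum_const,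
    ← Finset.mul_sum, ← htr]
  simp only [nsmul_eq_mul, Finset.card_univ]
  ring

lemma Mm_inv_rowsum [Nonempty W] (H : SimpleGraph W) (hdet : IsUnit (Mm H).det) (u : W) :
    ∑ v, (Mm H)⁻¹ u v = 1 := by
  have := congrFun (Mm_inv_mulVec_one H hdet) u
  simpa [mulVec, dotProduct] using this

lemma Mm_inv_colsum [Nonempty W] (H : SimpleGraph W) (hdet : IsUnit (Mm H).det) (v : W) :
    ∑ u, (Mm H)⁻¹ u v = 1 := by
  rw [Finset.sum_congr rfl fun u _ => Mm_inv_symm H v u]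
  exact Mm_inv_rowsum H hdet v

lemma adjMat_rowsum (H : SimpleGraph W) (v : W) :
    ∑ w, adjMat H v w = (H.degree v : ℝ) := by
  have : ∑ w, adjMat H v w = ∑ w, (if H.Adj v w then (1:ℝ) else 0) := rfl
  rw [this, Finset.sum_boole]
  congr 1
  rw [← SimpleGraph.card_neighborFinset_eq_degree]
  congr 1
  ext w
  simp [SimpleGraph.mem_neighborFinset]
lemma lap_mul_Jm (H : SimpleGraph W) : lapMat H * Jm W = 0 := by
  ext i j
  rw [Matrix.mul_apply]
  have : ∀ k, lapMat H i k * Jm W k j = lapMat H i k := fun k => mul_one _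
  rw [Finset.sum_congr rfl fun k _ => this k, lapMat_rowsum]
  rfl

lemma Jm_trace : Matrix.trace (Jm W) = (Fintype.card W : ℝ) := by
  simp [Matrix.trace, Matrix.diag, Jm]

lemma lapMat_eq_Mm_sub (H : SimpleGraph W) :
    lapMat H = Mm H - ((Fintype.card W : ℝ))⁻¹ • Jm W := by
  rw [Mm]; abel

end KfAux

namespace KfGraph
open Matrix KfAux

variable {V : Type u} [Fintype V] (G : SimpleGraph V) [Fintype ↥G.edgeSet]
  [DecidableEq ↥G.edgeSet]

noncomputable def Bm : Matrix V ↥G.edgeSet ℝ :=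
  Matrix.of fun v e => if v ∈ (e : Sym2 V) then 1 else 0

lemma edge_repr (e : ↥G.edgeSet) : ∃ a b : V, G.Adj a b ∧ (e : Sym2 V) = s(a,b) := by
  rcases e with ⟨e, he⟩
  revert he
  refine Sym2.ind (fun a b he => ?_) e
  exact ⟨a, b, (SimpleGraph.mem_edgeSet G).mp he, rfl⟩

lemma Bm_colsum (e : ↥G.edgeSet) : ∑ v, Bm G v e = 2 := by
  obtain ⟨a, b, hab, he⟩ := edge_repr G e
  have hne : a ≠ b := hab.ne
  have : ∀ v, Bm G v e = (if v = a then (1:ℝ) else 0) + (if v = b then 1 else 0) := by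
    intro v
    show (if v ∈ (e : Sym2 V) then (1:ℝ) else 0) = _
    rw [he]; simp only [Sym2.mem_iff]
    rcases eq_or_ne v a with rfl | ha
    · rw [if_pos (Or.inl rfl), if_pos rfl, if_neg hne]; norm_num
    · rcases eq_or_ne v b with rfl | hb
      · rw [if_pos (Or.inr rfl), if_neg ha, if_pos rfl]; norm_num
      · rw [if_neg (by tauto), if_neg ha, if_neg hb]; norm_num
  rw [Finset.sum_congr rfl fun v _ => this v, Finset.sum_add_distrib,
    Finset.sum_ite_eq' Finset.univ a (fun _ => (1:ℝ)),
    Finset.sum_ite_eq' Finset.univ b (fun _ => (1:ℝ))]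
  simp
  norm_num

lemma Bm_rowsum (v : V) : ∑ e, Bm G v e = (G.degree v : ℝ) := by
  have h1 : ∑ e, Bm G v e
      = ((Finset.univ.filter (fun e : ↥G.edgeSet => v ∈ (e : Sym2 V))).card : ℝ) := by
    rw [← Finset.sum_boole]
    rfl
  rw [h1]
  have h2 : (Finset.univ.filter (fun e : ↥G.edgeSet => v ∈ (e : Sym2 V))).card
      = Fintype.card {e : ↥G.edgeSet // v ∈ (e : Sym2 V)} := (Fintype.card_subtype _).symm
  have h3 : Fintype.card {e : ↥G.edgeSet // v ∈ (e : Sym2 V)}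
      = Fintype.card (G.incidenceSet v) := by
    apply Fintype.card_congr
    exact {
      toFun := fun x => ⟨x.1.1, x.1.2, x.2⟩
      invFun := fun x => ⟨⟨x.1, x.2.1⟩, x.2.2⟩
      left_inv := fun x => rfl
      right_inv := fun x => rfl }
  rw [h2, h3, SimpleGraph.card_incidenceSet_eq_degree]

lemma shared_unique (e f : ↥G.edgeSet) (hef : e ≠ f) (x y : V)
    (hxe : x ∈ (e : Sym2 V)) (hxf : x ∈ (f : Sym2 V))
    (hye : y ∈ (e : Sym2 V)) (hyf : y ∈ (f : Sym2 V)) : x = y := by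
  by_contra hxy
  apply hef
  apply Subtype.ext
  rw [(Sym2.mem_and_mem_iff hxy).mp ⟨hxe, hye⟩, (Sym2.mem_and_mem_iff hxy).mp ⟨hxf, hyf⟩]

lemma BBt_apply_diag (v : V) : (Bm G * (Bm G)ᵀ) v v = (G.degree v : ℝ) := by
  rw [Matrix.mul_apply, ← Bm_rowsum G v]
  refine Finset.sum_congr rfl fun e _ => ?_
  have hB : Bm G v e = if v ∈ (e : Sym2 V) then (1:ℝ) else 0 := rfl
  rw [Matrix.transpose_apply, hB]
  split_ifs <;> norm_num

lemma BBt_apply_ne (a b : V) (hab : a ≠ b) :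
    (Bm G * (Bm G)ᵀ) a b = adjMat G a b := by
  rw [Matrix.mul_apply]
  have hterm : ∀ e : ↥G.edgeSet, Bm G a e * (Bm G)ᵀ e b
      = (if a ∈ (e : Sym2 V) ∧ b ∈ (e : Sym2 V) then (1:ℝ) else 0) := by
    intro e
    rw [Matrix.transpose_apply]
    show (if a ∈ (e : Sym2 V) then (1:ℝ) else 0) * (if b ∈ (e : Sym2 V) then (1:ℝ) else 0) = _
    by_cases h1 : a ∈ (e : Sym2 V) <;> by_cases h2 : b ∈ (e : Sym2 V) <;>
      simp [h1, h2]
  rw [Finset.sum_congr rfl fun e _ => hterm e]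
  by_cases hadj : G.Adj a b
  · have hmem : s(a,b) ∈ G.edgeSet := (SimpleGraph.mem_edgeSet G).mpr hadj
    have hpred : ∀ e : ↥G.edgeSet, (a ∈ (e : Sym2 V) ∧ b ∈ (e : Sym2 V)) ↔ e = ⟨s(a,b), hmem⟩ := by
      intro e
      constructor
      · rintro ⟨h1, h2⟩
        exact Subtype.ext ((Sym2.mem_and_mem_iff hab).mp ⟨h1, h2⟩)
      · rintro rfl
        exact ⟨Sym2.mem_mk_left a b, Sym2.mem_mk_right a b⟩
    rw [Finset.sum_congr rfl fun e _ => by rw [if_congr (hpred e) rfl rfl]]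
    rw [Finset.sum_ite_eq' Finset.univ (⟨s(a,b), hmem⟩ : ↥G.edgeSet) (fun _ => (1:ℝ))]
    simp [adjMat, hadj]
  · rw [Finset.sum_congr rfl fun e _ => ?_, Finset.sum_const_zero]
    · simp [adjMat, hadj]
    · rw [if_neg]
      rintro ⟨h1, h2⟩
      exact hadj ((SimpleGraph.mem_edgeSet G).mp (by
        rw [← (Sym2.mem_and_mem_iff hab).mp ⟨h1, h2⟩]; exact e.2))

lemma BtB_apply_diag (e : ↥G.edgeSet) : ((Bm G)ᵀ * Bm G) e e = 2 := by
  rw [Matrix.mul_apply, ← Bm_colsum G e]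
  refine Finset.sum_congr rfl fun v _ => ?_
  rw [Matrix.transpose_apply]
  show (if v ∈ (e : Sym2 V) then (1:ℝ) else 0) * (if v ∈ (e : Sym2 V) then (1:ℝ) else 0)
      = (if v ∈ (e : Sym2 V) then (1:ℝ) else 0)
  split_ifs <;> norm_num

lemma BtB_apply_ne (e f : ↥G.edgeSet) (hef : e ≠ f) :
    ((Bm G)ᵀ * Bm G) e f = adjMat (lineG G) e f := by
  rw [Matrix.mul_apply]
  have hterm : ∀ v : V, (Bm G)ᵀ e v * Bm G v f
      = (if v ∈ (e : Sym2 V) ∧ v ∈ (f : Sym2 V) then (1:ℝ) else 0) := by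
    intro v
    rw [Matrix.transpose_apply]
    show (if v ∈ (e : Sym2 V) then (1:ℝ) else 0) * (if v ∈ (f : Sym2 V) then (1:ℝ) else 0) = _
    by_cases h1 : v ∈ (e : Sym2 V) <;> by_cases h2 : v ∈ (f : Sym2 V) <;> simp [h1, h2]
  rw [Finset.sum_congr rfl fun v _ => hterm v]
  by_cases hshare : ∃ v : V, v ∈ (e : Sym2 V) ∧ v ∈ (f : Sym2 V)
  · obtain ⟨v0, hv0⟩ := hshare
    have hAdj : (lineG G).Adj e f := ⟨hef, v0, hv0.1, hv0.2⟩
    rw [Finset.sum_eq_single_of_mem v0 (Finset.mem_univ v0)]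
    · rw [if_pos hv0]
      simp [adjMat, hAdj]
    · intro v _ hv
      rw [if_neg]
      rintro ⟨h1, h2⟩
      exact hv (shared_unique G e f hef v v0 h1 h2 hv0.1 hv0.2)
  · have hAdj : ¬ (lineG G).Adj e f := by
      rintro ⟨_, v, h1, h2⟩
      exact hshare ⟨v, h1, h2⟩
    rw [Finset.sum_congr rfl fun v _ => if_neg (fun h => hshare ⟨v, h⟩), Finset.sum_const_zero]
    simp [adjMat, hAdj]

lemma lap_eq_BBt (r : ℕ) (hdeg : ∀ v, G.degree v = r) :
    lapMat G = (2*(r:ℝ)) • (1 : Matrix V V ℝ) - Bm G * (Bm G)ᵀ := by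
  ext i j
  rw [lapMat_apply, Matrix.sub_apply, Matrix.smul_apply, Matrix.one_apply]
  rcases eq_or_ne i j with rfl | h
  · rw [if_pos rfl, if_pos rfl, BBt_apply_diag, hdeg]
    rw [Finset.sum_congr rfl fun w _ => rfl, adjMat_rowsum, hdeg]
    have : adjMat G i i = 0 := by simp [adjMat]
    rw [this]
    simp only [smul_eq_mul, mul_one, sub_zero]
    ring
  · rw [if_neg h, if_neg h, BBt_apply_ne G i j h]
    simp

lemma BtB_rowsum (r : ℕ) (hdeg : ∀ v, G.degree v = r) (e : ↥G.edgeSet) :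
    ∑ f, ((Bm G)ᵀ * Bm G) e f = 2*(r:ℝ) := by
  simp only [Matrix.mul_apply, Matrix.transpose_apply]
  rw [Finset.sum_comm]
  have inner : ∀ v, ∑ f : ↥G.edgeSet, Bm G v e * Bm G v f = Bm G v e * (r:ℝ) := by
    intro v; rw [← Finset.mul_sum, Bm_rowsum, hdeg]
  rw [Finset.sum_congr rfl fun v _ => inner v, ← Finset.sum_mul, Bm_colsum]

lemma lapL_eq_BtB (r : ℕ) (hdeg : ∀ v, G.degree v = r) :
    lapMat (lineG G) = (2*(r:ℝ)) • (1 : Matrix ↥G.edgeSet ↥G.edgeSet ℝ) - (Bm G)ᵀ * Bm G := by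
  ext e f
  rw [lapMat_apply, Matrix.sub_apply, Matrix.smul_apply, Matrix.one_apply]
  rcases eq_or_ne e f with rfl | h
  · have hrow : ∑ g, adjMat (lineG G) e g = 2*(r:ℝ) - 2 := by
      have hterm : ∀ g, adjMat (lineG G) e g
          = ((Bm G)ᵀ * Bm G) e g - (if e = g then 2 else 0) := by
        intro g
        rcases eq_or_ne e g with rfl | hg
        · rw [BtB_apply_diag, if_pos rfl]
          have : adjMat (lineG G) e e = 0 := by simp [adjMat]
          rw [this]; ring
        · rw [← BtB_apply_ne G e g hg, if_neg hg]; ring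
      rw [Finset.sum_congr rfl fun g _ => hterm g, Finset.sum_sub_distrib,
        BtB_rowsum G r hdeg, Finset.sum_ite_eq Finset.univ e (fun _ => (2:ℝ))]
      simp
    rw [if_pos rfl, if_pos rfl, hrow, BtB_apply_diag]
    have : adjMat (lineG G) e e = 0 := by simp [adjMat]
    rw [this]
    simp only [smul_eq_mul]
    ring
  · rw [if_neg h, if_neg h, ← BtB_apply_ne G e f h]
    simp only [smul_eq_mul]
    ring

end KfGraph

section MainProof
open Matrix KfAux KfGraph

set_option maxHeartbeats 2000000 in
theorem stmt3' {V : Type u} [Fintype V] (G : SimpleGraph V) (r n : ℕ)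
    (hconn : G.Connected) (hreg : ∀ v, Nat.card (G.neighborSet v) = r)
    (hn : n = Fintype.card V) (h2 : 2 ≤ n) :
    Kf (lineG G) = (r : ℝ) / 2 * Kf G + ((r : ℝ) - 2) * (n : ℝ) ^ 2 / 8 := by
  classical
  letI : DecidableEq ↥G.edgeSet := fun a b => Classical.propDecidable _
  haveI : Nonempty V := hconn.nonempty
  -- degrees
  have hdeg : ∀ v, G.degree v = r := by
    intro v
    have h := hreg v
    rwa [Nat.card_eq_fintype_card, SimpleGraph.card_neighborSet_eq_degree] at h
  -- r ≥ 1
  have hr1 : 1 ≤ r := by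
    by_contra hr
    push_neg at hr
    interval_cases r
    have hcard : 1 < Fintype.card V := by omega
    obtain ⟨u, w, huw⟩ := Fintype.exists_pair_of_one_lt_card hcard
    obtain ⟨p⟩ := hconn u w
    cases p with
    | nil => exact huw rfl
    | @cons _ b _ h' p' =>
      have : 0 < G.degree u := by
        rw [SimpleGraph.degree_pos_iff_exists_adj]
        exact ⟨b, h'⟩
      rw [hdeg u] at this
      exact absurd this (lt_irrefl 0)
  set m := Fintype.card ↥G.edgeSet with hm
  -- handshake
  have hnm : n * r = 2 * m := by
    have hs := SimpleGraph.sum_degrees_eq_twice_card_edges G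
    rw [Finset.sum_congr rfl fun v _ => hdeg v, Finset.sum_const, smul_eq_mul,
      Finset.card_univ, SimpleGraph.edgeFinset_card] at hs
    rw [hn, hm]
    exact hs
  have hm1 : 1 ≤ m := by nlinarith [hr1, h2, hnm]
  haveI : Nonempty ↥G.edgeSet := by
    rw [← Fintype.card_pos_iff]
    omega
  -- real casts
  have hrR : (0:ℝ) < (r:ℝ) := by exact_mod_cast hr1
  have hnR : (0:ℝ) < (n:ℝ) := by exact_mod_cast (by omega : 0 < n)
  have hdetG : IsUnit (Mm G).det := Mm_isUnit_det G hconn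
  have hcardV : (Fintype.card V : ℝ) = (n:ℝ) := by rw [hn]
  have hcardE : (Fintype.card ↥G.edgeSet : ℝ) = (m:ℝ) := by rw [hm]
  have hnne : (n:ℝ) ≠ 0 := ne_of_gt hnR
  have hmne : (m:ℝ) ≠ 0 := by
    have : (0:ℝ) < (m:ℝ) := by exact_mod_cast hm1
    exact ne_of_gt this
  have h2r : (2*(r:ℝ)) ≠ 0 := by positivity
  set A := (Mm G)⁻¹ with hA
  set B := Bm G with hB
  set X : Matrix V V ℝ := A - ((n:ℝ))⁻¹ • Jm V with hX
  set P : Matrix ↥G.edgeSet ↥G.edgeSet ℝ := Bᵀ * (X * B) with hP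
  set al : ℝ := 4/(n:ℝ) - 1/(m:ℝ) with hal
  have hMmG_mul : Mm G * A = 1 := Matrix.mul_nonsing_inv _ hdetG
  have hJA : Jm V * A = Jm V := by
    ext i j
    rw [Matrix.mul_apply]
    have h1 : ∀ k, Jm V i k * A k j = A k j := fun k => one_mul _
    rw [Finset.sum_congr rfl fun k _ => h1 k, Mm_inv_colsum G hdetG]
    rfl
  have hlapG : lapMat G = Mm G - ((n:ℝ))⁻¹ • Jm V := by
    rw [lapMat_eq_Mm_sub G, hcardV]
  have hLA : lapMat G * A = 1 - ((n:ℝ))⁻¹ • Jm V := by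
    rw [hlapG, Matrix.sub_mul, hMmG_mul, Matrix.smul_mul, hJA]
  have hLJ : lapMat G * Jm V = 0 := lap_mul_Jm G
  have hLX : lapMat G * X = 1 - ((n:ℝ))⁻¹ • Jm V := by
    rw [hX, Matrix.mul_sub, Matrix.mul_smul, hLJ, smul_zero, sub_zero, hLA]
  have hBBt : B * Bᵀ = (2*(r:ℝ)) • 1 - lapMat G := by
    rw [hB]
    rw [lap_eq_BBt G r hdeg]
    abel
  have hBtJB : Bᵀ * (Jm V * B) = (4:ℝ) • Jm ↥G.edgeSet := by
    ext e f
    rw [← Matrix.mul_assoc, Matrix.mul_apply]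
    have hJB : ∀ u : V, (Bᵀ * Jm V) e u = 2 := by
      intro u
      rw [Matrix.mul_apply]
      have h1 : ∀ k, Bᵀ e k * Jm V k u = B k e := fun k => by
        rw [Matrix.transpose_apply]
        exact mul_one _
      rw [Finset.sum_congr rfl fun k _ => h1 k]
      exact Bm_colsum G e
    have h2 : ∀ u, (Bᵀ * Jm V) e u * B u f = 2 * B u f := fun u => by rw [hJB u]
    rw [Finset.sum_congr rfl fun u _ => h2 u, ← Finset.mul_sum, Bm_colsum G f]
    simp [Jm]
    norm_num
  have hJJ : Jm ↥G.edgeSet * Jm ↥G.edgeSet = (m:ℝ) • Jm ↥G.edgeSet := by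
    ext e f
    rw [Matrix.mul_apply]
    have h1 : ∀ k, Jm ↥G.edgeSet e k * Jm ↥G.edgeSet k f = 1 := fun k => one_mul _
    rw [Finset.sum_congr rfl fun k _ => h1 k, Finset.sum_const, Finset.card_univ]
    simp [Jm, hm]
  have hBtBJ : (Bᵀ * B) * Jm ↥G.edgeSet = (2*(r:ℝ)) • Jm ↥G.edgeSet := by
    ext e f
    rw [Matrix.mul_apply]
    have h1 : ∀ g, (Bᵀ*B) e g * Jm ↥G.edgeSet g f = (Bᵀ*B) e g := fun g => mul_one _
    rw [Finset.sum_congr rfl fun g _ => h1 g]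
    rw [hB, BtB_rowsum G r hdeg]
    simp [Jm]
  set JVE : Matrix V ↥G.edgeSet ℝ := Matrix.of fun _ _ => 1 with hJVE
  set JEV : Matrix ↥G.edgeSet V ℝ := Matrix.of fun _ _ => 1 with hJEV
  have hBJ : B * Jm ↥G.edgeSet = (r:ℝ) • JVE := by
    ext u f
    rw [Matrix.mul_apply]
    have h1 : ∀ g, B u g * Jm ↥G.edgeSet g f = B u g := fun g => mul_one _
    rw [Finset.sum_congr rfl fun g _ => h1 g, hB, Bm_rowsum G u, hdeg u]
    simp [hJVE]
  have hXJ : X * JVE = 0 := by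
    ext u f
    rw [Matrix.mul_apply]
    have h1 : ∀ k, X u k * JVE k f = X u k := fun k => mul_one _
    rw [Finset.sum_congr rfl fun k _ => h1 k, hX]
    change ∑ k, (A u k - ((n:ℝ))⁻¹ * Jm V u k) = 0
    rw [Finset.sum_sub_distrib, Mm_inv_rowsum G hdetG]
    have h3 : ∑ k : V, ((n:ℝ))⁻¹ * Jm V u k = ((n:ℝ))⁻¹ * (Fintype.card V : ℝ) := by
      have : ∀ k : V, ((n:ℝ))⁻¹ * Jm V u k = ((n:ℝ))⁻¹ := fun k => mul_one _
      rw [Finset.sum_congr rfl fun k _ => this k, Finset.sum_const, Finset.card_univ]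
      simp [mul_comm]
    rw [h3, hcardV]
    simp [hnne]
  have hPJ : P * Jm ↥G.edgeSet = 0 := by
    rw [hP, Matrix.mul_assoc, Matrix.mul_assoc, hBJ, Matrix.mul_smul, hXJ, smul_zero,
      Matrix.mul_zero]
  have hJBt : Jm ↥G.edgeSet * Bᵀ = (r:ℝ) • JEV := by
    ext e u
    rw [Matrix.mul_apply]
    have h1 : ∀ g, Jm ↥G.edgeSet e g * Bᵀ g u = B u g := fun g => by
      rw [Matrix.transpose_apply]; exact one_mul _
    rw [Finset.sum_congr rfl fun g _ => h1 g, hB, Bm_rowsum G u, hdeg u]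
    simp [hJEV]
  have hJEVX : JEV * X = 0 := by
    ext e u
    rw [Matrix.mul_apply]
    have h1 : ∀ k, JEV e k * X k u = X k u := fun k => one_mul _
    rw [Finset.sum_congr rfl fun k _ => h1 k, hX]
    simp only [Matrix.sub_apply, Matrix.smul_apply, smul_eq_mul]
    rw [Finset.sum_sub_distrib, Mm_inv_colsum G hdetG]
    have h3 : ∑ k : V, ((n:ℝ))⁻¹ * Jm V k u = ((n:ℝ))⁻¹ * (Fintype.card V : ℝ) := by
      have : ∀ k : V, ((n:ℝ))⁻¹ * Jm V k u = ((n:ℝ))⁻¹ := fun k => mul_one _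
      rw [Finset.sum_congr rfl fun k _ => this k, Finset.sum_const, Finset.card_univ]
      simp [mul_comm]
    rw [h3, hcardV]
    simp [hnne]
  have hJP : Jm ↥G.edgeSet * P = 0 := by
    rw [hP, ← Matrix.mul_assoc, hJBt, Matrix.smul_mul, ← Matrix.mul_assoc, hJEVX,
      Matrix.zero_mul, smul_zero]
  have hLXB : lapMat G * (X * B) = B - ((n:ℝ))⁻¹ • (Jm V * B) := by
    rw [← Matrix.mul_assoc, hLX, Matrix.sub_mul, Matrix.one_mul, Matrix.smul_mul]
  have hBtn : Bᵀ * (((n:ℝ))⁻¹ • (Jm V * B)) = (4/(n:ℝ)) • Jm ↥G.edgeSet := by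
    rw [Matrix.mul_smul, hBtJB, smul_smul]
    congr 1
    ring
  have hBtBP : (Bᵀ * B) * P = (2*(r:ℝ)) • P - (Bᵀ * B - (4/(n:ℝ)) • Jm ↥G.edgeSet) := by
    have e1 : (Bᵀ * B) * P = Bᵀ * ((B * Bᵀ) * (X * B)) := by
      rw [hP, Matrix.mul_assoc, ← Matrix.mul_assoc B Bᵀ (X * B)]
    rw [e1, hBBt, Matrix.sub_mul, Matrix.smul_mul, Matrix.one_mul, hLXB, Matrix.mul_sub,
      Matrix.mul_smul, Matrix.mul_sub, hBtn, ← hP]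
  have hMmL : Mm (lineG G) = ((2*(r:ℝ)) • 1 - Bᵀ * B) + ((m:ℝ))⁻¹ • Jm ↥G.edgeSet := by
    rw [Mm, hcardE, lapL_eq_BtB G r hdeg, hB]
  have hMmLJ : Mm (lineG G) * Jm ↥G.edgeSet = Jm ↥G.edgeSet := by
    rw [hMmL, Matrix.add_mul, Matrix.sub_mul, Matrix.smul_mul, Matrix.one_mul, hBtBJ,
      Matrix.smul_mul, hJJ, smul_smul, sub_self, zero_add, inv_mul_cancel₀ hmne, one_smul]
  have hMmLP : Mm (lineG G) * P = Bᵀ * B - (4/(n:ℝ)) • Jm ↥G.edgeSet := by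
    rw [hMmL, Matrix.add_mul, Matrix.sub_mul, Matrix.smul_mul, Matrix.one_mul, hBtBP,
      Matrix.smul_mul, hJP, smul_zero, add_zero]
    abel
  set C := (2*(r:ℝ))⁻¹ • ((1 + P) + al • Jm ↥G.edgeSet) with hC
  have hMmLC : Mm (lineG G) * C = 1 := by
    rw [hC, Matrix.mul_smul, Matrix.mul_add, Matrix.mul_add, Matrix.mul_one, hMmLP,
      Matrix.mul_smul, hMmLJ, hMmL]
    rw [hal]
    match_scalars
    · field_simp
    · field_simp; ring
    · field_simp
      ring
  have hdetL : IsUnit (Mm (lineG G)).det := Matrix.isUnit_det_of_right_inverse hMmLC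
  have hinvL : (Mm (lineG G))⁻¹ = C := Matrix.inv_eq_right_inv hMmLC
  -- traces
  have htrJE : Matrix.trace (Jm ↥G.edgeSet) = (m:ℝ) := by rw [Jm_trace, hcardE]
  have htrJV : Matrix.trace (Jm V) = (n:ℝ) := by rw [Jm_trace, hcardV]
  have htrX : Matrix.trace X = Matrix.trace A - 1 := by
    rw [hX, Matrix.trace_sub, Matrix.trace_smul, htrJV, smul_eq_mul, inv_mul_cancel₀ hnne]
  have htrLX : Matrix.trace (lapMat G * X) = (n:ℝ) - 1 := by
    rw [hLX, Matrix.trace_sub, Matrix.trace_one, Matrix.trace_smul, htrJV, smul_eq_mul,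
      inv_mul_cancel₀ hnne, hcardV]
  have htrP : Matrix.trace P = 2*(r:ℝ)*(Matrix.trace A - 1) - ((n:ℝ) - 1) := by
    rw [hP, Matrix.trace_mul_comm, Matrix.mul_assoc, hBBt, Matrix.mul_sub, Matrix.mul_smul,
      Matrix.mul_one, Matrix.trace_sub, Matrix.trace_smul, htrX, Matrix.trace_mul_comm X,
      htrLX, smul_eq_mul]
  have htrC : Matrix.trace C = (2*(r:ℝ))⁻¹ * (((m:ℝ) + Matrix.trace P) + al * (m:ℝ)) := by
    rw [hC, Matrix.trace_smul, Matrix.trace_add, Matrix.trace_add, Matrix.trace_one,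
      Matrix.trace_smul, htrJE, hcardE, smul_eq_mul, smul_eq_mul]
  -- Kirchhoff indices
  have hKfG : Kf G = (n:ℝ) * Matrix.trace A - (n:ℝ) := by
    rw [Kf_trace G hdetG, hcardV]
  have hKfL0 := Kf_trace (lineG G) hdetL
  have hKfL : Kf (lineG G) = (m:ℝ) * Matrix.trace C - (m:ℝ) := by
    rw [hKfL0, hinvL, hcardE]
  -- final arithmetic
  have hmr : (m:ℝ) = (n:ℝ)*(r:ℝ)/2 := by
    have hc : ((n*r : ℕ):ℝ) = ((2*m : ℕ):ℝ) := by exact_mod_cast congrArg (fun k : ℕ => (k:ℝ)) hnm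
    push_cast at hc
    linarith
  rw [hKfL, htrC, htrP, hal, hKfG, hmr]
  field_simp
  ring


end MainProof


theorem stmt3 {V : Type u} [Fintype V] (G : SimpleGraph V) (r n : ℕ)
    (hconn : G.Connected) (hreg : regOf G r) (hn : n = Fintype.card V) (h2 : 2 ≤ n) :
    Kf (lineG G) = (r : ℝ) / 2 * Kf G + ((r : ℝ) - 2) * (n : ℝ) ^ 2 / 8 := by
  exact stmt3' G r n hconn hreg hn h2
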